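/- Let X be a δ-hyperbolic graph, θ ≥ 0, and c a vertex with vertices x, y. If the angle at c between x and y is greater than θ + 12δ, then for every choice of edges ε1, ε2 at c starting geodesics from c to x and from c to y respectively, the angle at c between ε1 and the reverse of ε2 is at least θ. -/

import Mathlib

/-!
Two geodesics from `c` to a common endpoint start with edges making angle at most `6δ`: thinness of
the bigon they form lets one cross from one to the other without coming back to `c`. The angle at
`c` is a distance in the graph with `c` removed, so by the triangle inequality it changes by at
most `6δ + 6δ` when `e1, e2` are replaced by `ε1` and the reverse of `ε2`.
-/

/-- A graph: vertices, oriented edges, origin/terminus maps, and a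
fixed-point-free edge-reversing involution. -/
structure MGraph where
  V : Type
  E : Type
  o : E → V
  t : E → V
  rev : E → E
  rev_o : ∀ e, o (rev e) = t e
  rev_t : ∀ e, t (rev e) = o e
  rev_rev : ∀ e, rev (rev e) = e
  rev_ne : ∀ e, rev e ≠ e

namespace MGraph

variable (X : MGraph)

/-- A walk from `x` to `y` given by a list of consecutive edges. -/
def IsWalk : List X.E → X.V → X.V → Prop
  | [], x, y => x = y
  | e :: es, x, y => X.o e = x ∧ IsWalk es (X.t e) y

/-- The vertices visited by a walk starting at `x`. -/
def walkVerts : X.V → List X.E → List X.V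
  | x, [] => [x]
  | x, e :: es => x :: walkVerts (X.t e) es

/-- The graph metric (length of each edge is 1), valued in `ℕ∞`. -/
noncomputable def dist (x y : X.V) : ℕ∞ :=
  sInf {n : ℕ∞ | ∃ es, X.IsWalk es x y ∧ (es.length : ℕ∞) = n}

/-- The distance from `x` to `y` in the graph with the vertex `v` removed. -/
noncomputable def delDist (v x y : X.V) : ℕ∞ :=
  sInf {n : ℕ∞ | ∃ es, X.IsWalk es x y ∧ v ∉ X.walkVerts x es ∧ (es.length : ℕ∞) = n}

/-- The angle at `v = t e1 = o e2` between two edges `e1, e2`: the distance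
from `o e1` to `t e2` in the graph with the vertex `t e1` removed. -/
noncomputable def angle (e1 e2 : X.E) : ℕ∞ :=
  X.delDist (X.t e1) (X.o e1) (X.t e2)

/-- A geodesic is a walk whose length realizes the distance. -/
def IsGeodesic (es : List X.E) (x y : X.V) : Prop :=
  X.IsWalk es x y ∧ (es.length : ℕ∞) = X.dist x y

/-- `∠_c(x1,x2) > θ` : there are edges `e1, e2` with `t e1 = o e2 = c`, each
lying on a geodesic between `c` and `x_i`, making an angle `> θ` at `c`. -/
def AngleGT (c x1 x2 : X.V) (θ : ℕ∞) : Prop :=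
  ∃ (e1 e2 : X.E) (es1 es2 : List X.E), X.t e1 = c ∧ X.o e2 = c ∧
    X.IsGeodesic (X.rev e1 :: es1) c x1 ∧ X.IsGeodesic (e2 :: es2) c x2 ∧
    θ < X.angle e1 e2

/-- All pairs of consecutive edges of a walk make an angle at most `θ`. -/
def AngleBounded (θ : ℕ∞) : List X.E → Prop
  | [] => True
  | [_] => True
  | e :: e' :: es => X.angle e e' ≤ θ ∧ AngleBounded θ (e' :: es)

/-- `v` is a vertex of the cone of parameter `θ` around the oriented edge `e`:
it lies on a path starting at `o e` by the edge `e`, of length at most `θ`,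
whose consecutive edges make angles at most `θ`. -/
def InConeV (θ : ℕ∞) (e : X.E) (v : X.V) : Prop :=
  ∃ (es : List X.E) (y : X.V), X.IsWalk (e :: es) (X.o e) y ∧
    ((e :: es).length : ℕ∞) ≤ θ ∧ X.AngleBounded θ (e :: es) ∧
    v ∈ X.walkVerts (X.o e) (e :: es)

/-- `ε` is an edge of the cone of parameter `θ` around the oriented edge `e`. -/
def InConeE (θ : ℕ∞) (e ε : X.E) : Prop :=
  ∃ (es : List X.E) (y : X.V), X.IsWalk (e :: es) (X.o e) y ∧
    ((e :: es).length : ℕ∞) ≤ θ ∧ X.AngleBounded θ (e :: es) ∧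
    (ε ∈ e :: es ∨ X.rev ε ∈ e :: es)

/-- A graph is fine if for each edge `e` and each `L`, only finitely many
edges arrive at `o e` making an angle at most `L` with `e`. -/
def Fine : Prop :=
  ∀ (e : X.E) (L : ℕ), {e' : X.E | X.t e' = X.o e ∧ X.angle e' e ≤ (L : ℕ∞)}.Finite

/-- δ-hyperbolicity: geodesic triangles are δ-thin. -/
def Hyperbolic (δ : ℕ) : Prop :=
  ∀ (a b c : X.V) (p q r : List X.E),
    X.IsGeodesic p a b → X.IsGeodesic q b c → X.IsGeodesic r a c →
    ∀ v ∈ X.walkVerts a p, ∃ w, (w ∈ X.walkVerts b q ∨ w ∈ X.walkVerts a r) ∧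
      X.dist v w ≤ (δ : ℕ∞)

/-- The four point inequality form of δ-hyperbolicity. -/
def FourPoint (δ : ℕ) : Prop :=
  ∀ a x y y' : X.V,
    X.dist a x + X.dist y y' ≤
      max (X.dist a y + X.dist y' x) (X.dist a y' + X.dist y x) + (δ : ℕ∞)

/-- Connectedness. -/
def Connected : Prop := ∀ x y : X.V, ∃ es, X.IsWalk es x y

/-- `t` is on an `α`-geodesic between `x` and `a`. -/
def OnAlphaGeod (α : ℕ∞) (t x a : X.V) : Prop :=
  X.dist x t + X.dist t a ≤ X.dist x a + α

/-- The set `𝓔_{a,x}(ρ)` of edges at distance `ρ` from `a` lying on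
geodesics between `a` and `x`. -/
def GeodEdgeAt (a x : X.V) (ρ : ℕ∞) (e : X.E) : Prop :=
  X.dist a (X.o e) = ρ ∧ ∃ es, (X.IsGeodesic es a x ∨ X.IsGeodesic es x a) ∧ e ∈ es

/-- The set `U_α[a,x]` of points on `α`-conical-geodesics between `x` and `a`. -/
def ConicalSet (α : ℕ) (a x : X.V) : Set X.V :=
  {t | X.OnAlphaGeod (α : ℕ∞) t x a ∧ X.dist a t ≤ X.dist a x ∧
       ∀ e, X.GeodEdgeAt a x (X.dist a t) e → X.InConeV ((40 * α : ℕ) : ℕ∞) e t}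

end MGraph

theorem ENat.sInf_mem_of_ne_top {s : Set ℕ∞} (h : sInf s ≠ ⊤) : sInf s ∈ s :=
  csInf_mem (Set.nonempty_iff_ne_empty.2 fun hs => h (by rw [hs, sInf_empty]))

namespace MGraph

variable {X : MGraph}

def walkEnd (X : MGraph) : X.V → List X.E → X.V
  | x, [] => x
  | _, e :: es => X.walkEnd (X.t e) es

@[simp] lemma walkEnd_nil (x : X.V) : X.walkEnd x [] = x := rfl

@[simp] lemma walkEnd_cons (x : X.V) (e : X.E) (es : List X.E) :
    X.walkEnd x (e :: es) = X.walkEnd (X.t e) es := rfl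

lemma IsWalk.eq_walkEnd : ∀ {es : List X.E} {x y : X.V}, X.IsWalk es x y → y = X.walkEnd x es
  | [], _, _, h => h.symm
  | _ :: es, _, _, h => IsWalk.eq_walkEnd (es := es) h.2

lemma isWalk_append {es fs : List X.E} {x z : X.V} :
    X.IsWalk (es ++ fs) x z ↔
      X.IsWalk es x (X.walkEnd x es) ∧ X.IsWalk fs (X.walkEnd x es) z := by
  induction es generalizing x with
  | nil => simp [IsWalk]
  | cons e es ih => simp [IsWalk, ih, and_assoc]

lemma IsWalk.append {es fs : List X.E} {x y z : X.V} (h₁ : X.IsWalk es x y)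
    (h₂ : X.IsWalk fs y z) : X.IsWalk (es ++ fs) x z := by
  rw [isWalk_append, ← h₁.eq_walkEnd]
  exact ⟨h₁, h₂⟩

lemma self_mem_walkVerts (x : X.V) (es : List X.E) : x ∈ X.walkVerts x es := by
  cases es <;> simp [walkVerts]

lemma walkEnd_mem_walkVerts (x : X.V) (es : List X.E) : X.walkEnd x es ∈ X.walkVerts x es := by
  induction es generalizing x with
  | nil => simp [walkVerts]
  | cons e es ih => simp [walkVerts, ih]

lemma mem_walkVerts_iff {v x : X.V} {es : List X.E} :
    v ∈ X.walkVerts x es ↔ ∃ l₁ l₂, es = l₁ ++ l₂ ∧ v = X.walkEnd x l₁ := by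
  induction es generalizing x with
  | nil => simp [walkVerts]
  | cons e es ih =>
    simp only [walkVerts, List.mem_cons, ih]
    constructor
    · rintro (rfl | ⟨l₁, l₂, rfl, rfl⟩)
      · exact ⟨[], _, rfl, rfl⟩
      · exact ⟨e :: l₁, l₂, rfl, rfl⟩
    · rintro ⟨_ | ⟨a, l₁⟩, l₂, h, rfl⟩
      · exact Or.inl rfl
      · simp only [List.cons_append, List.cons.injEq] at h
        obtain ⟨rfl, rfl⟩ := h
        exact Or.inr ⟨l₁, l₂, rfl, rfl⟩

lemma mem_walkVerts_append {v x : X.V} {es fs : List X.E} :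
    v ∈ X.walkVerts x (es ++ fs) ↔
      v ∈ X.walkVerts x es ∨ v ∈ X.walkVerts (X.walkEnd x es) fs := by
  induction es generalizing x with
  | nil =>
    exact (or_iff_right_of_imp fun h => List.mem_singleton.1 h ▸ self_mem_walkVerts x fs).symm
  | cons e es ih => simp [walkVerts, ih, or_assoc]

def revWalk (X : MGraph) (es : List X.E) : List X.E := es.reverse.map X.rev

@[simp] lemma length_revWalk (es : List X.E) : (X.revWalk es).length = es.length := by
  simp [revWalk]

lemma revWalk_cons (e : X.E) (es : List X.E) :
    X.revWalk (e :: es) = X.revWalk es ++ [X.rev e] := by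
  simp [revWalk]

lemma IsWalk.revWalk : ∀ {es : List X.E} {x y : X.V}, X.IsWalk es x y →
    X.IsWalk (X.revWalk es) y x
  | [], _, _, h => h.symm
  | e :: _, _, _, h => by
    rw [revWalk_cons]
    exact h.2.revWalk.append ⟨X.rev_o e, (X.rev_t e).trans h.1⟩

lemma IsWalk.mem_walkVerts_revWalk {v : X.V} : ∀ {es : List X.E} {x y : X.V},
    X.IsWalk es x y → (v ∈ X.walkVerts y (X.revWalk es) ↔ v ∈ X.walkVerts x es)
  | [], _, _, h => by subst h; rfl
  | e :: es, x, y, h => by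
    rw [revWalk_cons, mem_walkVerts_append, ← h.2.revWalk.eq_walkEnd,
      h.2.mem_walkVerts_revWalk]
    simp only [walkVerts, List.mem_cons, X.rev_t, h.1, List.not_mem_nil, or_false]
    have := self_mem_walkVerts (X.t e) es
    constructor
    · rintro (h | rfl | rfl) <;> simp_all
    · rintro (rfl | h) <;> simp_all

lemma IsWalk.dist_le {es : List X.E} {x y : X.V} (h : X.IsWalk es x y) :
    X.dist x y ≤ es.length :=
  sInf_le ⟨es, h, rfl⟩

lemma exists_isWalk_length_eq_dist {x y : X.V} (h : X.dist x y ≠ ⊤) :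
    ∃ es, X.IsWalk es x y ∧ (es.length : ℕ∞) = X.dist x y :=
  ENat.sInf_mem_of_ne_top h

@[simp] lemma dist_self (x : X.V) : X.dist x x = 0 :=
  nonpos_iff_eq_zero.1 (by simpa using (show X.IsWalk [] x x from rfl).dist_le)

lemma dist_comm (x y : X.V) : X.dist x y = X.dist y x := by
  have key (a b : X.V) : X.dist a b ≤ X.dist b a :=
    le_sInf fun _ ⟨es, hes, hn⟩ => hn ▸ by simpa using hes.revWalk.dist_le
  exact le_antisymm (key x y) (key y x)

lemma dist_triangle (x y z : X.V) : X.dist x z ≤ X.dist x y + X.dist y z := by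
  rcases eq_or_ne (X.dist x y) ⊤ with h₁ | h₁
  · simp [h₁]
  rcases eq_or_ne (X.dist y z) ⊤ with h₂ | h₂
  · simp [h₂]
  obtain ⟨es, hes, hes'⟩ := exists_isWalk_length_eq_dist h₁
  obtain ⟨fs, hfs, hfs'⟩ := exists_isWalk_length_eq_dist h₂
  calc X.dist x z ≤ (es ++ fs).length := (hes.append hfs).dist_le
    _ = _ := by rw [List.length_append, Nat.cast_add, hes', hfs']

lemma IsWalk.delDist_le {es : List X.E} {c x y : X.V} (h : X.IsWalk es x y)
    (hc : c ∉ X.walkVerts x es) : X.delDist c x y ≤ es.length :=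
  sInf_le ⟨es, h, hc, rfl⟩

lemma exists_isWalk_length_eq_delDist {c x y : X.V} (h : X.delDist c x y ≠ ⊤) :
    ∃ es, X.IsWalk es x y ∧ c ∉ X.walkVerts x es ∧ (es.length : ℕ∞) = X.delDist c x y :=
  ENat.sInf_mem_of_ne_top h

lemma delDist_comm (c x y : X.V) : X.delDist c x y = X.delDist c y x := by
  have key (a b : X.V) : X.delDist c a b ≤ X.delDist c b a :=
    le_sInf fun _ ⟨es, hes, hc, hn⟩ => hn ▸ by
      simpa using hes.revWalk.delDist_le (mt hes.mem_walkVerts_revWalk.1 hc)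
  exact le_antisymm (key x y) (key y x)

lemma delDist_triangle (c x y z : X.V) :
    X.delDist c x z ≤ X.delDist c x y + X.delDist c y z := by
  rcases eq_or_ne (X.delDist c x y) ⊤ with h₁ | h₁
  · simp [h₁]
  rcases eq_or_ne (X.delDist c y z) ⊤ with h₂ | h₂
  · simp [h₂]
  obtain ⟨es, hes, hces, hes'⟩ := exists_isWalk_length_eq_delDist h₁
  obtain ⟨fs, hfs, hcfs, hfs'⟩ := exists_isWalk_length_eq_delDist h₂
  have hc : c ∉ X.walkVerts x (es ++ fs) := by
    rw [mem_walkVerts_append, ← hes.eq_walkEnd]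
    exact not_or.2 ⟨hces, hcfs⟩
  calc X.delDist c x z ≤ (es ++ fs).length := (hes.append hfs).delDist_le hc
    _ = _ := by rw [List.length_append, Nat.cast_add, hes', hfs']

lemma delDist_le_of_dist_le {c v w : X.V} {b : ℕ} (hvw : X.dist v w ≤ b)
    (hcv : (b : ℕ∞) < X.dist c v) : X.delDist c v w ≤ b := by
  obtain ⟨es, hes, hlen⟩ := exists_isWalk_length_eq_dist (ne_top_of_le_ne_top (by simp) hvw)
  have hc : c ∉ X.walkVerts v es := by
    intro hc
    obtain ⟨l₁, l₂, rfl, rfl⟩ := mem_walkVerts_iff.1 hc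
    refine hcv.not_ge ?_
    calc X.dist (X.walkEnd v l₁) v = X.dist v (X.walkEnd v l₁) := dist_comm _ _
      _ ≤ l₁.length := (isWalk_append.1 hes).1.dist_le
      _ ≤ (l₁ ++ l₂).length := by simp
      _ = X.dist v w := hlen
      _ ≤ b := hvw
  exact (hes.delDist_le hc).trans (hlen.le.trans hvw)

lemma IsGeodesic.append_left {es fs : List X.E} {x z : X.V} (h : X.IsGeodesic (es ++ fs) x z) :
    X.IsGeodesic es x (X.walkEnd x es) := by
  obtain ⟨hes, hfs⟩ := isWalk_append.1 h.1
  refine ⟨hes, le_antisymm ?_ hes.dist_le⟩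
  rw [← ENat.add_le_add_iff_right (ENat.natCast_ne_top fs.length)]
  calc (es.length : ℕ∞) + fs.length = X.dist x z := by
        rw [← h.2, List.length_append, Nat.cast_add]
    _ ≤ X.dist x (X.walkEnd x es) + X.dist (X.walkEnd x es) z := dist_triangle _ _ _
    _ ≤ _ := by gcongr; exact hfs.dist_le

lemma IsGeodesic.not_mem_walkVerts {e : X.E} {es : List X.E} {c x : X.V}
    (h : X.IsGeodesic (e :: es) c x) : c ∉ X.walkVerts (X.t e) es := by
  intro hmem
  obtain ⟨l₁, l₂, rfl, hc⟩ := mem_walkVerts_iff.1 hmem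
  have := (show X.IsGeodesic ((e :: l₁) ++ l₂) c x from h).append_left.2
  rw [walkEnd_cons, ← hc, dist_self] at this
  simp at this

lemma IsGeodesic.exists_mem_dist_eq {e : X.E} {es : List X.E} {c x : X.V}
    (h : X.IsGeodesic (e :: es) c x) {k : ℕ} (hk : k ≤ es.length) :
    ∃ v ∈ X.walkVerts (X.t e) es, X.dist c v = k + 1 := by
  refine ⟨X.walkEnd (X.t e) (es.take k),
    mem_walkVerts_iff.2 ⟨_, _, (List.take_append_drop k es).symm, rfl⟩, ?_⟩
  have := (show X.IsGeodesic ((e :: es.take k) ++ es.drop k) c x by simpa using h).append_left.2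
  simpa [hk] using this.symm

lemma IsGeodesic.delDist_le {e : X.E} {es : List X.E} {c x v : X.V} {k : ℕ}
    (h : X.IsGeodesic (e :: es) c x) (hv : v ∈ X.walkVerts (X.t e) es)
    (hcv : X.dist c v ≤ k + 1) : X.delDist c (X.t e) v ≤ k := by
  obtain ⟨l₁, l₂, rfl, rfl⟩ := mem_walkVerts_iff.1 hv
  have hg : X.IsGeodesic (e :: l₁) c (X.walkEnd (X.t e) l₁) :=
    (show X.IsGeodesic ((e :: l₁) ++ l₂) c x from h).append_left
  have hlen : l₁.length ≤ k := by
    rw [← hg.2, List.length_cons] at hcv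
    have : l₁.length + 1 ≤ k + 1 := by exact_mod_cast hcv
    omega
  calc X.delDist c (X.t e) (X.walkEnd (X.t e) l₁) ≤ l₁.length :=
        hg.1.2.delDist_le hg.not_mem_walkVerts
    _ ≤ k := by exact_mod_cast hlen

lemma delDist_le_of_mem_isGeodesic {e f : X.E} {es fs : List X.E} {c x y v w : X.V} {a b d : ℕ}
    (hx : X.IsGeodesic (e :: es) c x) (hy : X.IsGeodesic (f :: fs) c y)
    (hv : v ∈ X.walkVerts (X.t e) es) (hw : w ∈ X.walkVerts (X.t f) fs)
    (hcv : X.dist c v ≤ a + 1) (hvw : X.dist v w ≤ b) (hb : (b : ℕ∞) < X.dist c v)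
    (hcw : X.dist c w ≤ d + 1) :
    X.delDist c (X.t e) (X.t f) ≤ (a + b + d : ℕ) :=
  calc X.delDist c (X.t e) (X.t f)
      ≤ X.delDist c (X.t e) v + X.delDist c v w + X.delDist c w (X.t f) :=
        (delDist_triangle c _ w _).trans (by gcongr; exact delDist_triangle c _ v _)
    _ ≤ (a + b + d : ℕ) := by
        rw [delDist_comm c w]
        push_cast
        gcongr
        exacts [hx.delDist_le hv hcv, delDist_le_of_dist_le hvw hb, hy.delDist_le hw hcw]

theorem Hyperbolic.exists_dist_le_of_isGeodesic {δ : ℕ} (hδ : X.Hyperbolic δ) {c x v : X.V}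
    {p q : List X.E} (hp : X.IsGeodesic p c x) (hq : X.IsGeodesic q c x)
    (hv : v ∈ X.walkVerts c p) :
    ∃ w, (w = x ∨ w ∈ X.walkVerts c q) ∧ X.dist v w ≤ δ := by
  obtain ⟨w, hw, hvw⟩ := hδ c x x p [] q hp ⟨rfl, by simp⟩ hq v hv
  exact ⟨w, by simpa [walkVerts] using hw, hvw⟩

/-- Short geodesics: go to `x` and back. Long ones: the vertex `v` at distance `2δ + 1` from `c`
on the first geodesic is `δ`-close to a vertex `w` of the second one, and neither `x` nor `c`
can be that close to `v`. -/
theorem Hyperbolic.delDist_le_of_isGeodesic {δ : ℕ} (hδ : X.Hyperbolic δ) {c x : X.V}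
    {e f : X.E} {es fs : List X.E} (hp : X.IsGeodesic (e :: es) c x)
    (hq : X.IsGeodesic (f :: fs) c x) : X.delDist c (X.t e) (X.t f) ≤ (6 * δ : ℕ) := by
  have hcx : X.dist c x = es.length + 1 := by rw [← hp.2]; simp
  rcases le_or_gt es.length (3 * δ) with hshort | hlong
  · have hxp : x ∈ X.walkVerts (X.t e) es := hp.1.2.eq_walkEnd ▸ walkEnd_mem_walkVerts _ _
    have hxq : x ∈ X.walkVerts (X.t f) fs := hq.1.2.eq_walkEnd ▸ walkEnd_mem_walkVerts _ _
    have hcx' : X.dist c x ≤ (3 * δ : ℕ) + 1 := by rw [hcx]; gcongr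
    refine (delDist_le_of_mem_isGeodesic hp hq hxp hxq hcx' (b := 0) (by simp) ?_ hcx').trans ?_
    · simp [hcx]
    · exact_mod_cast (by omega : 3 * δ + 0 + 3 * δ ≤ 6 * δ)
  · obtain ⟨v, hv, hcv⟩ := hp.exists_mem_dist_eq (k := 2 * δ) (by omega)
    obtain ⟨w, rfl | hw, hvw⟩ :=
      hδ.exists_dist_le_of_isGeodesic hp hq (List.mem_cons_of_mem c hv)
    · have := (dist_triangle c v w).trans (add_le_add hcv.le hvw)
      rw [hcx] at this
      norm_cast at this
      omega
    rcases List.mem_cons.1 hw with rfl | hw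
    · rw [dist_comm, hcv] at hvw
      norm_cast at hvw
      omega
    have hcw : X.dist c w ≤ (3 * δ : ℕ) + 1 := by
      refine (dist_triangle c v w).trans ((add_le_add hcv.le hvw).trans ?_)
      norm_cast
      omega
    refine (delDist_le_of_mem_isGeodesic hp hq hv hw hcv.le hvw ?_ hcw).trans ?_
    · rw [hcv]; norm_cast; omega
    · exact_mod_cast (by omega : 2 * δ + δ + 3 * δ ≤ 6 * δ)

theorem Hyperbolic.angle_le_angle_add {δ : ℕ} (hδ : X.Hyperbolic δ) {c x y : X.V}
    {e₁ e₂ ε₁ ε₂ : X.E} {fs₁ fs₂ es₁ es₂ : List X.E} (he₁ : X.t e₁ = c)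
    (hx : X.IsGeodesic (X.rev e₁ :: fs₁) c x) (hy : X.IsGeodesic (e₂ :: fs₂) c y)
    (hx' : X.IsGeodesic (ε₁ :: es₁) c x) (hy' : X.IsGeodesic (ε₂ :: es₂) c y) :
    X.angle e₁ e₂ ≤ X.angle (X.rev ε₂) ε₁ + (12 * δ : ℕ) := by
  have h₁ := hδ.delDist_le_of_isGeodesic hx hx'
  have h₂ := hδ.delDist_le_of_isGeodesic hy' hy
  rw [X.rev_t] at h₁
  rw [angle, angle, he₁, X.rev_t, X.rev_o, hy'.1.1]
  calc X.delDist c (X.o e₁) (X.t e₂)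
      ≤ X.delDist c (X.o e₁) (X.t ε₁) + X.delDist c (X.t ε₁) (X.t ε₂)
        + X.delDist c (X.t ε₂) (X.t e₂) :=
        (delDist_triangle c _ (X.t ε₂) _).trans (by gcongr; exact delDist_triangle c _ _ _)
    _ ≤ (6 * δ : ℕ) + X.delDist c (X.t ε₂) (X.t ε₁) + (6 * δ : ℕ) := by
        rw [delDist_comm c (X.t ε₁)]
        gcongr
    _ = X.delDist c (X.t ε₂) (X.t ε₁) + (12 * δ : ℕ) := by push_cast; ring

end MGraph

theorem stmt_3_general (X : MGraph) (δ θ : ℕ) (hδ : X.Hyperbolic δ)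
    (c x y : X.V) (h : X.AngleGT c x y ((θ + 12 * δ : ℕ) : ℕ∞)) :
    ∀ (ε1 ε2 : X.E) (es1 es2 : List X.E),
      X.IsGeodesic (ε1 :: es1) c x → X.IsGeodesic (ε2 :: es2) c y →
      (θ : ℕ∞) ≤ X.angle (X.rev ε2) ε1 := by
  intro ε1 ε2 es1 es2 hx hy
  obtain ⟨e1, e2, fs1, fs2, he1, -, hx', hy', hθ⟩ := h
  have hangle := hδ.angle_le_angle_add he1 hx' hy' hx hy
  have : ((θ : ℕ) : ℕ∞) + (12 * δ : ℕ) < X.angle (X.rev ε2) ε1 + (12 * δ : ℕ) := by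
    exact_mod_cast hθ.trans_le hangle
  exact (lt_of_add_lt_add_right this).le

/-- if `∠_c(x,y) > θ + 12δ`, then for every choice of edges
`ε1, ε2` at `c` starting geodesics to `x` and to `y`, the angle at `c` between
`ε1` and the reverse of `ε2` is at least `θ`. -/
theorem stmt_3 (X : MGraph) (δ θ : ℕ) (hδpos : 0 < δ) (hδ : X.Hyperbolic δ)
    (c x y : X.V) (h : X.AngleGT c x y ((θ + 12 * δ : ℕ) : ℕ∞)) :
    ∀ (ε1 ε2 : X.E) (es1 es2 : List X.E),
      X.IsGeodesic (ε1 :: es1) c x → X.IsGeodesic (ε2 :: es2) c y →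
      (θ : ℕ∞) ≤ X.angle (X.rev ε2) ε1 :=
  stmt_3_general X δ θ hδ c x y h
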